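/- arXiv:1412.1373 — 2 statements merged into one kernel-verified Lean document; each statement's English description precedes it below -/
import Mathlib

section
/- Let p ≥ 1, let Σ : ℝ^p → PD_p(ℝ) assign to each point a real positive definite p×p matrix, and let ξ be a finite positive measure on (0,∞). Then the kernel R^{NS}(x,y) = φ_xy ∫_0^∞ exp(−Q_xy(x−y)/t²) ξ(dt) is positive semidefinite on ℝ^p × ℝ^p: for every n ∈ ℕ, all points x_1, …, x_n ∈ ℝ^p and all real coefficients c_1, …, c_n, ∑_{i,j} c_i c_j R^{NS}(x_i, x_j) ≥ 0. -/
/-!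
Fix `t > 0`. The factor `φ` is invariant under the common rescaling `Σ ↦ (t²/2) Σ`, which turns
`exp (-Q_xy(x-y)/t²)` into `exp (-(x-y)ᵀ (P_x + P_y)⁻¹ (x-y))` with `P_x = (t²/2) Σ_x`.
Completing the square gives the Gaussian convolution identity
`∫ exp (-(u-a)ᵀ P⁻¹ (u-a)) exp (-(u-b)ᵀ R⁻¹ (u-b)) du
  = π^{p/2} √(det P det R / det (P+R)) exp (-(a-b)ᵀ (P+R)⁻¹ (a-b))`,
so the kernel at scale `t` is a positive multiple of `∫ g_x g_y` with
`g_x(u) = det(P_x)^{-1/4} exp (-(u-x)ᵀ P_x⁻¹ (u-x))`, and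
`∑ cᵢ cⱼ ∫ g_{xᵢ} g_{xⱼ} = ∫ (∑ cᵢ g_{xᵢ})² ≥ 0`.
Integrating these positive semidefinite kernels against `ξ` keeps them positive semidefinite.
-/

open MeasureTheory Matrix Real

/-- `Q_xy(h) = hᵀ ((Σx+Σy)/2)⁻¹ h`. -/
noncomputable def Qform {p : ℕ} (A B : Matrix (Fin p) (Fin p) ℝ) (h : Fin p → ℝ) : ℝ :=
  h ⬝ᵥ ((((2:ℝ)⁻¹ • (A + B))⁻¹).mulVec h)

/-- `φ_xy = det(Σx)^{1/4} det(Σy)^{1/4} det((Σx+Σy)/2)^{-1/2}`. -/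
noncomputable def phiFactor {p : ℕ} (A B : Matrix (Fin p) (Fin p) ℝ) : ℝ :=
  A.det ^ ((1:ℝ) / 4) * B.det ^ ((1:ℝ) / 4) * ((2:ℝ)⁻¹ • (A + B)).det ^ (-(1:ℝ) / 2)

open scoped MatrixOrder

variable {ι : Type*} [Fintype ι]

namespace Matrix

section CommRing

variable {R : Type*} [CommRing R]

theorem IsSymm.dotProduct_mulVec_comm {A : Matrix ι ι R} (hA : A.IsSymm) (v w : ι → R) :
    v ⬝ᵥ A *ᵥ w = w ⬝ᵥ A *ᵥ v := by
  rw [dotProduct_mulVec, ← mulVec_transpose, hA.eq, dotProduct_comm]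

theorem IsSymm.add_dotProduct_mulVec_add {M : Matrix ι ι R} (hM : M.IsSymm) (w e : ι → R) :
    (w + e) ⬝ᵥ M *ᵥ (w + e) = w ⬝ᵥ M *ᵥ w + 2 * (w ⬝ᵥ M *ᵥ e) + e ⬝ᵥ M *ᵥ e := by
  rw [mulVec_add, dotProduct_add, add_dotProduct, add_dotProduct, hM.dotProduct_mulVec_comm e w]
  ring

variable [DecidableEq ι]

theorem mul_nonsing_inv_add_mul_comm {A B : Matrix ι ι R} (h : IsUnit (A + B).det) :
    A * (A + B)⁻¹ * B = B * (A + B)⁻¹ * A := by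
  have h₁ : A * (A + B)⁻¹ * (A + B) = A := by rw [mul_assoc, nonsing_inv_mul _ h, mul_one]
  have h₂ : (A + B) * (A + B)⁻¹ * A = A := by rw [mul_nonsing_inv _ h, one_mul]
  rw [mul_add] at h₁
  rw [add_mul, add_mul] at h₂
  rw [eq_sub_of_add_eq' h₁, eq_sub_of_add_eq h₂, sub_sub_cancel]

theorem sub_dotProduct_mulVec_sub_add_sub_dotProduct_mulVec_sub {A B : Matrix ι ι R}
    (hA : A.IsSymm) (hB : B.IsSymm) (hAB : IsUnit (A + B).det) (a b u : ι → R) :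
    (u - a) ⬝ᵥ A *ᵥ (u - a) + (u - b) ⬝ᵥ B *ᵥ (u - b) =
      (a - b) ⬝ᵥ (A * (A + B)⁻¹ * B) *ᵥ (a - b) +
        (u - (A + B)⁻¹ *ᵥ (A *ᵥ a + B *ᵥ b)) ⬝ᵥ (A + B) *ᵥ
          (u - (A + B)⁻¹ *ᵥ (A *ᵥ a + B *ᵥ b)) := by
  set S := A + B
  set m := S⁻¹ *ᵥ (A *ᵥ a + B *ᵥ b)
  set T := A * S⁻¹ * B
  have hshift (c : ι → R) : m - c = S⁻¹ *ᵥ (A *ᵥ (a - c) + B *ᵥ (b - c)) := by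
    conv_lhs => rw [← one_mulVec c, ← nonsing_inv_mul _ hAB, ← mulVec_mulVec]
    rw [← mulVec_sub]
    congr 1
    simp only [S, add_mulVec, mulVec_sub]
    abel
  have hma : A *ᵥ (m - a) = T *ᵥ (b - a) := by
    rw [hshift, sub_self, mulVec_zero, zero_add, mulVec_mulVec, mulVec_mulVec]
  have hmb : B *ᵥ (m - b) = T *ᵥ (a - b) := by
    rw [hshift, sub_self, mulVec_zero, add_zero, mulVec_mulVec, mulVec_mulVec,
      (mul_nonsing_inv_add_mul_comm hAB).symm]
  have hcross : A *ᵥ (m - a) + B *ᵥ (m - b) = 0 := by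
    rw [hma, hmb, ← mulVec_add, sub_add_sub_cancel, sub_self, mulVec_zero]
  calc (u - a) ⬝ᵥ A *ᵥ (u - a) + (u - b) ⬝ᵥ B *ᵥ (u - b)
      = (u - m + (m - a)) ⬝ᵥ A *ᵥ (u - m + (m - a))
        + (u - m + (m - b)) ⬝ᵥ B *ᵥ (u - m + (m - b)) := by simp only [sub_add_sub_cancel]
    _ = (u - m) ⬝ᵥ S *ᵥ (u - m) + 2 * ((u - m) ⬝ᵥ (A *ᵥ (m - a) + B *ᵥ (m - b)))
        + ((m - a) ⬝ᵥ A *ᵥ (m - a) + (m - b) ⬝ᵥ B *ᵥ (m - b)) := by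
      rw [hA.add_dotProduct_mulVec_add, hB.add_dotProduct_mulVec_add, add_mulVec,
        dotProduct_add, dotProduct_add]
      ring
    _ = (a - b) ⬝ᵥ T *ᵥ (a - b) + (u - m) ⬝ᵥ S *ᵥ (u - m) := by
      rw [hcross, dotProduct_zero, mul_zero, add_zero, hma, hmb, ← neg_sub a b, mulVec_neg,
        dotProduct_neg, neg_add_eq_sub, ← sub_dotProduct, sub_sub_sub_cancel_left, add_comm]

theorem inv_add_inv_eq_inv_mul_add_mul_inv {P Q : Matrix ι ι R} (hP : IsUnit P.det)
    (hQ : IsUnit Q.det) : P⁻¹ + Q⁻¹ = Q⁻¹ * (P + Q) * P⁻¹ := by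
  rw [mul_add, add_mul, mul_assoc, mul_nonsing_inv _ hP, mul_one, nonsing_inv_mul _ hQ, one_mul,
    add_comm]

theorem inv_mul_inv_add_inv_mul_inv {P Q : Matrix ι ι R} (hP : IsUnit P.det)
    (hQ : IsUnit Q.det) : P⁻¹ * (P⁻¹ + Q⁻¹)⁻¹ * Q⁻¹ = (P + Q)⁻¹ := by
  rw [inv_add_inv_eq_inv_mul_add_mul_inv hP hQ, mul_inv_rev, mul_inv_rev,
    nonsing_inv_nonsing_inv _ hP, nonsing_inv_nonsing_inv _ hQ, ← mul_assoc, ← mul_assoc,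
    nonsing_inv_mul _ hP, one_mul, mul_assoc, mul_nonsing_inv _ hQ, mul_one]

end CommRing

variable [DecidableEq ι] {N : Matrix ι ι ℝ}

theorem measurableEmbedding_mulVec (hN : N.det ≠ 0) : MeasurableEmbedding (N *ᵥ ·) := by
  let := N.invertibleOfIsUnitDet hN.isUnit
  exact (N.toLinearEquiv' this).toContinuousLinearEquiv.toHomeomorph.measurableEmbedding

theorem map_mulVec_volume (hN : N.det ≠ 0) :
    Measure.map (N *ᵥ ·) volume = ENNReal.ofReal |N.det⁻¹| • (volume : Measure (ι → ℝ)) :=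
  Real.map_matrix_volume_pi_eq_smul_volume_pi hN

theorem integral_comp_mulVec (hN : N.det ≠ 0) (f : (ι → ℝ) → ℝ) :
    ∫ u, f (N *ᵥ u) = |N.det|⁻¹ * ∫ v, f v := by
  rw [← (measurableEmbedding_mulVec hN).integral_map, map_mulVec_volume hN,
    integral_smul_measure, ENNReal.toReal_ofReal (abs_nonneg _), abs_inv, smul_eq_mul]

theorem integrable_comp_mulVec (hN : N.det ≠ 0) {f : (ι → ℝ) → ℝ} (hf : Integrable f) :
    Integrable fun u => f (N *ᵥ u) := by
  rw [← Function.comp_def, ← (measurableEmbedding_mulVec hN).integrable_map_iff,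
    map_mulVec_volume hN]
  exact hf.smul_measure ENNReal.ofReal_ne_top

end Matrix

theorem exp_neg_dotProduct_self_eq_prod (v : ι → ℝ) :
    exp (-(v ⬝ᵥ v)) = ∏ i, exp (-1 * v i ^ 2) := by
  simp [dotProduct, ← exp_sum, sq]

theorem integral_exp_neg_dotProduct_self :
    ∫ v : ι → ℝ, exp (-(v ⬝ᵥ v)) = √π ^ Fintype.card ι := by
  simp_rw [exp_neg_dotProduct_self_eq_prod]
  rw [integral_fintype_prod_volume_eq_pow (fun x => exp (-1 * x ^ 2)), integral_gaussian, div_one]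

theorem integrable_exp_neg_dotProduct_self :
    Integrable fun v : ι → ℝ => exp (-(v ⬝ᵥ v)) := by
  simp_rw [exp_neg_dotProduct_self_eq_prod, volume_pi]
  exact .fintype_prod fun _ => integrable_exp_neg_mul_sq one_pos

namespace Matrix

variable [DecidableEq ι] {M P Q : Matrix ι ι ℝ}

theorem PosSemidef.dotProduct_mulVec_eq_sqrt (hM : M.PosSemidef) (u : ι → ℝ) :
    u ⬝ᵥ M *ᵥ u = (CFC.sqrt M *ᵥ u) ⬝ᵥ (CFC.sqrt M *ᵥ u) := by
  have hsymm : (CFC.sqrt M).IsSymm :=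
    isHermitian_iff_isSymm.mp (CFC.sqrt_nonneg M).posSemidef.isHermitian
  conv_lhs => rw [← CFC.sqrt_mul_sqrt_self M hM.nonneg]
  rw [← mulVec_mulVec, dotProduct_mulVec, ← mulVec_transpose, hsymm.eq]

namespace PosDef

theorem det_sqrt_ne_zero (hM : M.PosDef) : (CFC.sqrt M).det ≠ 0 := by
  rw [hM.posSemidef.det_sqrt, RCLike.sqrt_real]
  exact (sqrt_pos.2 hM.det_pos).ne'

theorem integrable_exp_neg_dotProduct_mulVec (hM : M.PosDef) :
    Integrable fun u : ι → ℝ => exp (-(u ⬝ᵥ M *ᵥ u)) := by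
  simp_rw [hM.posSemidef.dotProduct_mulVec_eq_sqrt]
  exact integrable_comp_mulVec hM.det_sqrt_ne_zero integrable_exp_neg_dotProduct_self

theorem integral_exp_neg_dotProduct_mulVec (hM : M.PosDef) :
    ∫ u : ι → ℝ, exp (-(u ⬝ᵥ M *ᵥ u)) = √π ^ Fintype.card ι / √M.det := by
  simp_rw [hM.posSemidef.dotProduct_mulVec_eq_sqrt]
  rw [integral_comp_mulVec hM.det_sqrt_ne_zero (fun v => exp (-(v ⬝ᵥ v))),
    integral_exp_neg_dotProduct_self, hM.posSemidef.det_sqrt, RCLike.sqrt_real,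
    abs_of_nonneg (sqrt_nonneg _), inv_mul_eq_div]

theorem exp_neg_mul_exp_neg (hP : P.PosDef) (hQ : Q.PosDef) (a b u : ι → ℝ) :
    exp (-((u - a) ⬝ᵥ P⁻¹ *ᵥ (u - a))) * exp (-((u - b) ⬝ᵥ Q⁻¹ *ᵥ (u - b))) =
      exp (-((a - b) ⬝ᵥ (P + Q)⁻¹ *ᵥ (a - b))) *
        exp (-((u - (P⁻¹ + Q⁻¹)⁻¹ *ᵥ (P⁻¹ *ᵥ a + Q⁻¹ *ᵥ b)) ⬝ᵥ (P⁻¹ + Q⁻¹) *ᵥ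
          (u - (P⁻¹ + Q⁻¹)⁻¹ *ᵥ (P⁻¹ *ᵥ a + Q⁻¹ *ᵥ b)))) := by
  rw [← exp_add, ← exp_add, ← neg_add, ← neg_add,
    sub_dotProduct_mulVec_sub_add_sub_dotProduct_mulVec_sub
      (isHermitian_iff_isSymm.mp hP.inv.isHermitian)
      (isHermitian_iff_isSymm.mp hQ.inv.isHermitian) (hP.inv.add hQ.inv).det_pos.ne'.isUnit,
    inv_mul_inv_add_inv_mul_inv hP.det_pos.ne'.isUnit hQ.det_pos.ne'.isUnit]

theorem integrable_exp_neg_mul_exp_neg (hP : P.PosDef) (hQ : Q.PosDef) (a b : ι → ℝ) :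
    Integrable fun u =>
      exp (-((u - a) ⬝ᵥ P⁻¹ *ᵥ (u - a))) * exp (-((u - b) ⬝ᵥ Q⁻¹ *ᵥ (u - b))) := by
  simp_rw [exp_neg_mul_exp_neg hP hQ]
  exact ((hP.inv.add hQ.inv).integrable_exp_neg_dotProduct_mulVec.comp_sub_right _).const_mul _

theorem integral_exp_neg_mul_exp_neg (hP : P.PosDef) (hQ : Q.PosDef) (a b : ι → ℝ) :
    ∫ u, exp (-((u - a) ⬝ᵥ P⁻¹ *ᵥ (u - a))) * exp (-((u - b) ⬝ᵥ Q⁻¹ *ᵥ (u - b))) =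
      √π ^ Fintype.card ι * √(P.det * Q.det / (P + Q).det) *
        exp (-((a - b) ⬝ᵥ (P + Q)⁻¹ *ᵥ (a - b))) := by
  have hdet : (P⁻¹ + Q⁻¹).det = (P.det * Q.det / (P + Q).det)⁻¹ := by
    rw [inv_add_inv_eq_inv_mul_add_mul_inv hP.det_pos.ne'.isUnit hQ.det_pos.ne'.isUnit, det_mul,
      det_mul, det_nonsing_inv, det_nonsing_inv]
    simp only [Ring.inverse_eq_inv']
    field_simp
  simp_rw [exp_neg_mul_exp_neg hP hQ]
  rw [integral_const_mul, integral_sub_right_eq_self (fun u => exp (-(u ⬝ᵥ _ *ᵥ u))),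
    (hP.inv.add hQ.inv).integral_exp_neg_dotProduct_mulVec, hdet, sqrt_inv, div_inv_eq_mul]
  ring

end PosDef

end Matrix

noncomputable def gaussianFeature [DecidableEq ι] (P : Matrix ι ι ℝ) (a u : ι → ℝ) : ℝ :=
  P.det ^ (-(1 / 4 : ℝ)) * exp (-((u - a) ⬝ᵥ P⁻¹ *ᵥ (u - a)))

section gaussianFeature

variable [DecidableEq ι] {P Q : Matrix ι ι ℝ}

theorem gaussianFeature_mul_gaussianFeature (a b u : ι → ℝ) :
    gaussianFeature P a u * gaussianFeature Q b u =
      P.det ^ (-(1 / 4 : ℝ)) * Q.det ^ (-(1 / 4 : ℝ)) *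
        (exp (-((u - a) ⬝ᵥ P⁻¹ *ᵥ (u - a))) * exp (-((u - b) ⬝ᵥ Q⁻¹ *ᵥ (u - b)))) := by
  simp only [gaussianFeature]
  ring

theorem integrable_gaussianFeature_mul (hP : P.PosDef) (hQ : Q.PosDef) (a b : ι → ℝ) :
    Integrable fun u => gaussianFeature P a u * gaussianFeature Q b u := by
  simp_rw [gaussianFeature_mul_gaussianFeature]
  exact (hP.integrable_exp_neg_mul_exp_neg hQ a b).const_mul _

theorem integral_gaussianFeature_mul (hP : P.PosDef) (hQ : Q.PosDef) (a b : ι → ℝ) :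
    ∫ u, gaussianFeature P a u * gaussianFeature Q b u =
      √π ^ Fintype.card ι * (P.det ^ (-(1 / 4 : ℝ)) * Q.det ^ (-(1 / 4 : ℝ)) *
        √(P.det * Q.det / (P + Q).det)) * exp (-((a - b) ⬝ᵥ (P + Q)⁻¹ *ᵥ (a - b))) := by
  simp_rw [gaussianFeature_mul_gaussianFeature]
  rw [integral_const_mul, hP.integral_exp_neg_mul_exp_neg hQ]
  ring

end gaussianFeature

def IsPosSemidefKernel {α : Type*} (K : α → α → ℝ) : Prop :=
  ∀ (n : ℕ) (x : Fin n → α) (c : Fin n → ℝ), 0 ≤ ∑ i, ∑ j, c i * c j * K (x i) (x j)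

section IsPosSemidefKernel

variable {α : Type*}

theorem isPosSemidefKernel_mul_self (f : α → ℝ) : IsPosSemidefKernel fun x y => f x * f y := by
  intro n x c
  have hsq : ∑ i, ∑ j, c i * c j * (f (x i) * f (x j)) = (∑ i, c i * f (x i)) ^ 2 := by
    rw [sq, Finset.sum_mul_sum]
    simp only [mul_mul_mul_comm]
  exact hsq ▸ sq_nonneg _

theorem IsPosSemidefKernel.const_mul {K : α → α → ℝ} (hK : IsPosSemidefKernel K) {C : ℝ}
    (hC : 0 ≤ C) : IsPosSemidefKernel fun x y => C * K x y := by
  intro n x c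
  have h := mul_nonneg hC (hK n x c)
  simp only [Finset.mul_sum] at h
  simpa only [mul_left_comm C] using h

theorem IsPosSemidefKernel.integral {β : Type*} [MeasurableSpace β] {μ : Measure β}
    {K : β → α → α → ℝ} (hK : ∀ᵐ t ∂μ, IsPosSemidefKernel (K t))
    (hint : ∀ x y, Integrable (fun t => K t x y) μ) :
    IsPosSemidefKernel fun x y => ∫ t, K t x y ∂μ := by
  intro n x c
  have hswap : ∑ i, ∑ j, c i * c j * ∫ t, K t (x i) (x j) ∂μ =
      ∫ t, ∑ i, ∑ j, c i * c j * K t (x i) (x j) ∂μ := by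
    simp_rw [← integral_const_mul]
    rw [integral_finsetSum _ fun i _ => integrable_finsetSum _ fun j _ => (hint _ _).const_mul _]
    simp_rw [integral_finsetSum _ fun j _ => (hint _ _).const_mul _]
  rw [hswap]
  exact integral_nonneg_of_ae (hK.mono fun t ht => ht n x c)

end IsPosSemidefKernel

section phiFactor

variable {p : ℕ} {P Q : Matrix (Fin p) (Fin p) ℝ}

theorem phiFactor_eq (hP : P.PosDef) (hQ : Q.PosDef) :
    phiFactor P Q = ((2:ℝ)⁻¹ ^ p) ^ (-(1:ℝ) / 2) *
      (P.det ^ (-(1 / 4 : ℝ)) * Q.det ^ (-(1 / 4 : ℝ)) * √(P.det * Q.det / (P + Q).det)) := by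
  have hquarter {x : ℝ} (hx : 0 < x) : x ^ ((1:ℝ) / 4) = x ^ (-(1 / 4 : ℝ)) * √x := by
    rw [sqrt_eq_rpow, ← rpow_add hx]
    norm_num
  have hx := hP.det_pos
  have hy := hQ.det_pos
  have hz := (hP.add hQ).det_pos
  rw [phiFactor, det_smul, Fintype.card_fin, mul_rpow (by positivity) hz.le, hquarter hx,
    hquarter hy, sqrt_div (by positivity), sqrt_mul hx.le, div_eq_mul_inv _ (√_), ← sqrt_inv,
    sqrt_eq_rpow ((P + Q).det)⁻¹, inv_rpow hz.le, ← rpow_neg hz.le]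
  ring_nf

theorem phiFactor_smul (hP : P.PosSemidef) (hQ : Q.PosSemidef) {s : ℝ} (hs : 0 < s) :
    phiFactor (s • P) (s • Q) = phiFactor P Q := by
  have hsp : 0 < s ^ p := pow_pos hs p
  have hD := ((hP.add hQ).smul (by norm_num : (0:ℝ) ≤ 2⁻¹)).det_nonneg
  have hcancel : (s ^ p) ^ ((1:ℝ) / 4) * (s ^ p) ^ ((1:ℝ) / 4) * (s ^ p) ^ (-(1:ℝ) / 2) = 1 := by
    rw [← rpow_add hsp, ← rpow_add hsp]
    norm_num
  rw [phiFactor, phiFactor, ← smul_add, smul_comm (2⁻¹ : ℝ) s, det_smul, det_smul, det_smul,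
    Fintype.card_fin, mul_rpow hsp.le hP.det_nonneg, mul_rpow hsp.le hQ.det_nonneg,
    mul_rpow hsp.le hD]
  linear_combination (P.det ^ ((1:ℝ) / 4) * Q.det ^ ((1:ℝ) / 4) *
    ((2:ℝ)⁻¹ • (P + Q)).det ^ (-(1:ℝ) / 2)) * hcancel

theorem phiFactor_mul_exp_eq_integral (hP : P.PosDef) (hQ : Q.PosDef) (a b : Fin p → ℝ) :
    phiFactor P Q * exp (-((a - b) ⬝ᵥ (P + Q)⁻¹ *ᵥ (a - b))) =
      ((2:ℝ)⁻¹ ^ p) ^ (-(1:ℝ) / 2) / √π ^ p *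
        ∫ u, gaussianFeature P a u * gaussianFeature Q b u := by
  have : 0 < √π := sqrt_pos.2 pi_pos
  rw [integral_gaussianFeature_mul hP hQ, phiFactor_eq hP hQ, Fintype.card_fin]
  field_simp

theorem isPosSemidefKernel_phiFactor_mul_exp (S : (Fin p → ℝ) → Matrix (Fin p) (Fin p) ℝ)
    (hS : ∀ x, (S x).PosDef) :
    IsPosSemidefKernel fun x y =>
      phiFactor (S x) (S y) * exp (-((x - y) ⬝ᵥ (S x + S y)⁻¹ *ᵥ (x - y))) := by
  simp_rw [phiFactor_mul_exp_eq_integral (hS _) (hS _)]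
  exact .const_mul
    (.integral (ae_of_all _ fun u => isPosSemidefKernel_mul_self fun x => gaussianFeature (S x) x u)
      fun x y => integrable_gaussianFeature_mul (hS x) (hS y) x y)
    (by positivity)

theorem Qform_div_sq (hPQ : IsUnit (P + Q).det) {t : ℝ} (ht : t ≠ 0) (h : Fin p → ℝ) :
    Qform P Q h / t ^ 2 = h ⬝ᵥ ((t ^ 2 / 2) • P + (t ^ 2 / 2) • Q)⁻¹ *ᵥ h := by
  have hinv {c : ℝ} (hc : c ≠ 0) : (c • (P + Q))⁻¹ = c⁻¹ • (P + Q)⁻¹ :=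
    inv_eq_left_inv <| by
      rw [smul_mul_smul_comm, inv_mul_cancel₀ hc, nonsing_inv_mul _ hPQ, one_smul]
  rw [Qform, ← smul_add, hinv (by norm_num), hinv (by positivity), smul_mulVec, smul_mulVec,
    dotProduct_smul, dotProduct_smul, smul_eq_mul, smul_eq_mul]
  field_simp

theorem Qform_nonneg (hP : P.PosDef) (hQ : Q.PosDef) (h : Fin p → ℝ) : 0 ≤ Qform P Q h :=
  ((hP.add hQ).smul (by norm_num : (0:ℝ) < 2⁻¹)).inv.posSemidef.dotProduct_mulVec_nonneg h

end phiFactor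

theorem integrable_exp_neg_div_sq {μ : Measure ℝ} [IsFiniteMeasure μ] {q : ℝ} (hq : 0 ≤ q) :
    Integrable (fun t => exp (-q / t ^ 2)) μ := by
  refine .of_bound (by fun_prop : Measurable fun t : ℝ => exp (-q / t ^ 2)).aestronglyMeasurable 1
    (ae_of_all _ fun t => ?_)
  rw [norm_of_nonneg (exp_pos _).le, exp_le_one_iff]
  exact div_nonpos_of_nonpos_of_nonneg (neg_nonpos.2 hq) (sq_nonneg t)

theorem nonstationary_correlation_posSemidef_general (p : ℕ)
    (S : (Fin p → ℝ) → Matrix (Fin p) (Fin p) ℝ) (hS : ∀ x, (S x).PosDef)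
    (ξ : Measure ℝ) [IsFiniteMeasure ξ] :
    ∀ (n : ℕ) (x : Fin n → (Fin p → ℝ)) (c : Fin n → ℝ),
      0 ≤ ∑ i : Fin n, ∑ j : Fin n,
        c i * c j * (phiFactor (S (x i)) (S (x j)) *
          ∫ t in Set.Ioi (0:ℝ),
            Real.exp (-(Qform (S (x i)) (S (x j)) (x i - x j)) / t ^ 2) ∂ξ) := by
  have hscale : ∀ t ∈ Set.Ioi (0:ℝ), IsPosSemidefKernel fun x y =>
      phiFactor (S x) (S y) * exp (-Qform (S x) (S y) (x - y) / t ^ 2) := by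
    intro t (ht : 0 < t)
    have hs : 0 < t ^ 2 / 2 := by positivity
    have := isPosSemidefKernel_phiFactor_mul_exp _ fun x => (hS x).smul hs
    simpa only [phiFactor_smul (hS _).posSemidef (hS _).posSemidef hs, neg_div,
      Qform_div_sq ((hS _).add (hS _)).det_pos.ne'.isUnit ht.ne'] using this
  have hR := IsPosSemidefKernel.integral (μ := ξ.restrict (Set.Ioi 0))
    ((ae_restrict_iff' measurableSet_Ioi).2 (ae_of_all _ hscale))
    fun x y => (integrable_exp_neg_div_sq (Qform_nonneg (hS x) (hS y) _)).const_mul _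
  simp only [integral_const_mul] at hR
  exact hR

/-- the non-stationary correlation kernel
`R^{NS}(x,y) = φ_xy ∫_0^∞ exp(−Q_xy(x−y)/t²) ξ(dt)` is positive semidefinite. -/
theorem nonstationary_correlation_posSemidef (p : ℕ) (hp : 1 ≤ p)
    (S : (Fin p → ℝ) → Matrix (Fin p) (Fin p) ℝ) (hS : ∀ x, (S x).PosDef)
    (ξ : Measure ℝ) [IsFiniteMeasure ξ] :
    ∀ (n : ℕ) (x : Fin n → (Fin p → ℝ)) (c : Fin n → ℝ),
      0 ≤ ∑ i : Fin n, ∑ j : Fin n,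
        c i * c j * (phiFactor (S (x i)) (S (x j)) *
          ∫ t in Set.Ioi (0:ℝ),
            Real.exp (-(Qform (S (x i)) (S (x j)) (x i - x j)) / t ^ 2) ∂ξ) :=
  nonstationary_correlation_posSemidef_general p S hS ξ
end

section
/- Let p ≥ 1, let Σ : ℝ^p → PD_p(ℝ) assign to each point a real positive definite p×p matrix, let ξ be a finite positive measure on (0,∞), and let σ : ℝ^p → ℝ be any function. Then the non-stationary covariance kernel C^{NS}(x,y) = σ(x) σ(y) φ_xy ∫_0^∞ exp(−Q_xy(x−y)/t²) ξ(dt) is positive semidefinite on ℝ^p × ℝ^p: for every n ∈ ℕ, all points x_1, …, x_n ∈ ℝ^p and all real coefficients c_1, …, c_n, ∑_{i,j} c_i c_j C^{NS}(x_i, x_j) ≥ 0. -/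
open MeasureTheory Matrix Real

/-!
For fixed `t` the kernel `φ_xy exp(-Q_xy(x - y)/t²)` is a positive multiple of the Gram kernel
`∫ k_x k_y` of the weighted Gaussians `k_x(u) = det(Σ_x)^{-1/4} exp(-2 (u - x)ᵀ Σ_x⁻¹ (u - x))`
(at `t = 1`; rescaling the points by `t⁻¹` gives the other `t`). This is the Gaussian
convolution identity: completing the square, the product of Gaussians with covariances
`A`, `B` integrates to a Gaussian in the difference of the centres with covariance `A + B`.
Gram kernels are positive semidefinite, the factor `σ(x) σ(y)` can be absorbed into the
coefficients, and integrating against `ξ` preserves positive semidefiniteness.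
-/

theorem sum_sum_mul_mul_mul_nonneg {ι R : Type*} [Fintype ι] [CommRing R] [LinearOrder R]
    [IsStrictOrderedRing R] (a c : ι → R) :
    0 ≤ ∑ i, ∑ j, c i * c j * (a i * a j) := by
  have h : ∑ i, ∑ j, c i * c j * (a i * a j) = (∑ i, c i * a i) ^ 2 := by
    rw [sq, Finset.sum_mul_sum]
    simp_rw [mul_mul_mul_comm]
  exact h ▸ sq_nonneg _

theorem sum_sum_mul_integral_nonneg {T ι : Type*} [MeasurableSpace T] [Fintype ι]
    (μ : Measure T) (K : ι → ι → T → ℝ) (hK : ∀ i j, Integrable (K i j) μ) (c : ι → ℝ)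
    (hpsd : ∀ᵐ t ∂μ, 0 ≤ ∑ i, ∑ j, c i * c j * K i j t) :
    0 ≤ ∑ i, ∑ j, c i * c j * ∫ t, K i j t ∂μ := by
  have hswap : ∑ i, ∑ j, c i * c j * ∫ t, K i j t ∂μ
      = ∫ t, ∑ i, ∑ j, c i * c j * K i j t ∂μ := by
    rw [integral_finsetSum _ fun i _ => integrable_finsetSum _ fun j _ => (hK i j).const_mul _]
    refine Finset.sum_congr rfl fun i _ => ?_
    rw [integral_finsetSum _ fun j _ => (hK i j).const_mul _]
    simp_rw [integral_const_mul]
  exact hswap ▸ integral_nonneg_of_ae hpsd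

section Gaussian

variable {ι : Type*} [Fintype ι]

theorem integral_exp_neg_sum_sq : ∫ v : ι → ℝ, exp (-∑ i, v i ^ 2) = √π ^ Fintype.card ι := by
  simp_rw [← Finset.sum_neg_distrib, exp_sum]
  rw [integral_fintype_prod_volume_eq_prod (f := fun _ x => exp (-x ^ 2))]
  simpa using congrArg (· ^ Fintype.card ι) (integral_gaussian 1)

theorem integral_comp_mulVec [DecidableEq ι] {M : Matrix ι ι ℝ} (hM : M.det ≠ 0)
    (f : (ι → ℝ) → ℝ) :
    ∫ v, f (M *ᵥ v) = |M.det|⁻¹ * ∫ v, f v := by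
  have : Invertible M := M.invertibleOfIsUnitDet hM.isUnit
  have he : MeasurableEmbedding (toLin' M) :=
    (M.toLinearEquiv' this).toContinuousLinearEquiv.toHomeomorph.measurableEmbedding
  change ∫ v, f (toLin' M v) = _
  rw [← he.integral_map, Real.map_matrix_volume_pi_eq_smul_volume_pi hM, integral_smul_measure,
    ENNReal.toReal_ofReal (by positivity), abs_inv, smul_eq_mul]

open scoped MatrixOrder in
theorem Matrix.PosDef.exists_dotProduct_mulVec_eq_sum_sq [DecidableEq ι] {M : Matrix ι ι ℝ}
    (hM : M.PosDef) :
    ∃ B : Matrix ι ι ℝ, |B.det| = √M.det ∧ ∀ v, v ⬝ᵥ M *ᵥ v = ∑ i, (B *ᵥ v) i ^ 2 := by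
  obtain ⟨B, rfl⟩ := CStarAlgebra.nonneg_iff_eq_star_mul_self.mp hM.posSemidef.nonneg
  refine ⟨B, ?_, fun v => ?_⟩
  · rw [star_eq_conjTranspose, det_mul, det_conjTranspose, star_trivial, ← sq, sqrt_sq_eq_abs]
  · rw [star_eq_conjTranspose, conjTranspose_eq_transpose_of_trivial, ← mulVec_mulVec,
      dotProduct_mulVec, vecMul_transpose]
    simp [dotProduct, sq]

theorem Matrix.PosDef.integral_exp_neg_dotProduct_mulVec_s12 [DecidableEq ι] {M : Matrix ι ι ℝ}
    (hM : M.PosDef) :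
    ∫ v, exp (-(v ⬝ᵥ M *ᵥ v)) = √π ^ Fintype.card ι / √M.det := by
  obtain ⟨B, hB, hMB⟩ := hM.exists_dotProduct_mulVec_eq_sum_sq
  have hBdet : B.det ≠ 0 := abs_pos.1 (hB ▸ sqrt_pos.2 hM.det_pos)
  simp_rw [hMB]
  rw [integral_comp_mulVec hBdet (fun w => exp (-∑ i, w i ^ 2)), integral_exp_neg_sum_sq, hB,
    inv_mul_eq_div]

theorem Matrix.IsSymm.dotProduct_mulVec_comm_s12 {R : Type*} [CommSemiring R] {M : Matrix ι ι R}
    (hM : M.IsSymm) (x y : ι → R) :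
    x ⬝ᵥ M *ᵥ y = y ⬝ᵥ M *ᵥ x := by
  rw [dotProduct_mulVec, ← mulVec_transpose, hM.eq, dotProduct_comm]

theorem dotProduct_mulVec_sub_add_dotProduct_mulVec [DecidableEq ι] {P R : Matrix ι ι ℝ}
    (hP : P.IsSymm) (hR : R.IsSymm) (hPR : IsUnit (P + R).det) (v d : ι → ℝ) :
    (v - d) ⬝ᵥ P *ᵥ (v - d) + v ⬝ᵥ R *ᵥ v
      = (v - (P + R)⁻¹ *ᵥ P *ᵥ d) ⬝ᵥ (P + R) *ᵥ (v - (P + R)⁻¹ *ᵥ P *ᵥ d)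
        + d ⬝ᵥ (P * (P + R)⁻¹ * R) *ᵥ d := by
  set S := P + R with hS_def
  set m := S⁻¹ *ᵥ P *ᵥ d
  have hm : S *ᵥ m = P *ᵥ d := by rw [mulVec_mulVec, mul_nonsing_inv S hPR, one_mulVec]
  have hmPd : m ⬝ᵥ P *ᵥ d = d ⬝ᵥ (P * S⁻¹ * P) *ᵥ d := by
    rw [hP.dotProduct_mulVec_comm_s12, ← mulVec_mulVec, ← mulVec_mulVec]
  have hconst : d ⬝ᵥ (P * S⁻¹ * P) *ᵥ d + d ⬝ᵥ (P * S⁻¹ * R) *ᵥ d = d ⬝ᵥ P *ᵥ d := by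
    rw [← dotProduct_add, ← add_mulVec, ← mul_add, mul_assoc, nonsing_inv_mul S hPR, mul_one]
  simp only [mulVec_sub, sub_dotProduct, dotProduct_sub]
  rw [hm, (hP.add hR).dotProduct_mulVec_comm_s12 m v, hm, hP.dotProduct_mulVec_comm_s12 d v, hmPd,
    ← hconst, hS_def, add_mulVec, dotProduct_add]
  ring

noncomputable def gaussian (P : Matrix ι ι ℝ) (a u : ι → ℝ) : ℝ :=
  exp (-((u - a) ⬝ᵥ P *ᵥ (u - a)))

theorem integral_gaussian_mul_gaussian [DecidableEq ι] {P R : Matrix ι ι ℝ} (hP : P.PosDef)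
    (hR : R.PosDef) (a b : ι → ℝ) :
    ∫ u, gaussian P a u * gaussian R b u
      = √π ^ Fintype.card ι / √(P + R).det
        * exp (-((a - b) ⬝ᵥ (P * (P + R)⁻¹ * R) *ᵥ (a - b))) := by
  have hS := hP.add hR
  set m := (P + R)⁻¹ *ᵥ P *ᵥ (a - b)
  have hshift : ∀ v, gaussian P a (v + b) * gaussian R b (v + b)
      = exp (-((a - b) ⬝ᵥ (P * (P + R)⁻¹ * R) *ᵥ (a - b)))
        * exp (-((v - m) ⬝ᵥ (P + R) *ᵥ (v - m))) := fun v => by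
    rw [gaussian, gaussian, ← exp_add, ← exp_add, ← neg_add, ← neg_add, add_sub_cancel_right,
      show v + b - a = v - (a - b) by abel,
      dotProduct_mulVec_sub_add_dotProduct_mulVec (isHermitian_iff_isSymm.mp hP.isHermitian)
        (isHermitian_iff_isSymm.mp hR.isHermitian) hS.det_pos.ne'.isUnit, add_comm]
  rw [← integral_add_right_eq_self _ b]
  simp_rw [hshift]
  rw [integral_const_mul, integral_sub_right_eq_self (fun v => exp (-(v ⬝ᵥ (P + R) *ᵥ v))),
    hS.integral_exp_neg_dotProduct_mulVec_s12, mul_comm]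

theorem integrable_gaussian_mul_gaussian [DecidableEq ι] {P R : Matrix ι ι ℝ} (hP : P.PosDef)
    (hR : R.PosDef) (a b : ι → ℝ) : Integrable fun u => gaussian P a u * gaussian R b u :=
  .of_integral_ne_zero <| by
    rw [integral_gaussian_mul_gaussian hP hR]
    have := (hP.add hR).det_pos
    positivity

theorem integral_gaussian_inv_mul_gaussian_inv [DecidableEq ι] {A B : Matrix ι ι ℝ}
    (hA : A.PosDef) (hB : B.PosDef) (a b : ι → ℝ) :
    ∫ u, gaussian A⁻¹ a u * gaussian B⁻¹ b u
      = √π ^ Fintype.card ι * √(A.det * B.det / (A + B).det)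
        * exp (-((a - b) ⬝ᵥ (A + B)⁻¹ *ᵥ (a - b))) := by
  have hAu : IsUnit A.det := hA.det_pos.ne'.isUnit
  have hBu : IsUnit B.det := hB.det_pos.ne'.isUnit
  have hsum : A⁻¹ + B⁻¹ = B⁻¹ * (A + B) * A⁻¹ := by
    rw [mul_add, add_mul, mul_assoc B⁻¹ A, mul_nonsing_inv A hAu, mul_one,
      nonsing_inv_mul B hBu, one_mul, add_comm]
  have hcross : A⁻¹ * (A⁻¹ + B⁻¹)⁻¹ * B⁻¹ = (A + B)⁻¹ := by
    rw [hsum, Matrix.mul_inv_rev, Matrix.mul_inv_rev, nonsing_inv_nonsing_inv A hAu,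
      nonsing_inv_nonsing_inv B hBu, ← mul_assoc, ← mul_assoc, nonsing_inv_mul A hAu, one_mul,
      mul_assoc, mul_nonsing_inv B hBu, mul_one]
  have hdet : (A⁻¹ + B⁻¹).det = (A + B).det / (A.det * B.det) := by
    rw [hsum, det_mul, det_mul, det_nonsing_inv, det_nonsing_inv, Ring.inverse_eq_inv']
    ring
  rw [integral_gaussian_mul_gaussian hA.inv hB.inv, hcross, hdet, ← inv_div (A.det * B.det),
    sqrt_inv, div_inv_eq_mul]

end Gaussian

section Nonstationary

variable {p : ℕ}

theorem Qform_smul (A B : Matrix (Fin p) (Fin p) ℝ) (r : ℝ) (h : Fin p → ℝ) :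
    Qform A B (r • h) = r ^ 2 * Qform A B h := by
  rw [Qform, Qform, mulVec_smul, dotProduct_smul, smul_dotProduct, smul_eq_mul, smul_eq_mul]
  ring

theorem Qform_nonneg_s12 {A B : Matrix (Fin p) (Fin p) ℝ} (hA : A.PosDef) (hB : B.PosDef)
    (h : Fin p → ℝ) : 0 ≤ Qform A B h := by
  have hM : (((2:ℝ)⁻¹ • (A + B))⁻¹).PosSemidef :=
    ((hA.add hB).smul (inv_pos.2 two_pos)).inv.posSemidef
  rw [Qform]
  simpa only [star_trivial] using hM.dotProduct_mulVec_nonneg h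

theorem phiFactor_eq_s12 {A B : Matrix (Fin p) (Fin p) ℝ} (hA : A.PosDef) (hB : B.PosDef) :
    phiFactor A B = 2 ^ p * (A.det ^ (-(1:ℝ) / 4) * B.det ^ (-(1:ℝ) / 4))
      * √(((2:ℝ)⁻¹ • A).det * ((2:ℝ)⁻¹ • B).det / ((2:ℝ)⁻¹ • A + (2:ℝ)⁻¹ • B).det) := by
  have hD : 0 < ((2:ℝ)⁻¹ • (A + B)).det := ((hA.add hB).smul (inv_pos.2 two_pos)).det_pos
  have hroot : ∀ a : ℝ, 0 < a → ∃ α, 0 < α ∧ a = α ^ 4 := fun a ha =>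
    ⟨a ^ ((1:ℝ) / 4), by positivity, by rw [← rpow_natCast, ← rpow_mul ha.le]; norm_num⟩
  obtain ⟨α, hα, hαA⟩ := hroot _ hA.det_pos
  obtain ⟨β, hβ, hβB⟩ := hroot _ hB.det_pos
  have hquarter : ∀ γ : ℝ, 0 < γ → (γ ^ 4) ^ ((1:ℝ) / 4) = γ := fun γ hγ => by
    rw [← rpow_natCast, ← rpow_mul hγ.le]; norm_num
  have hsqrt : √(((2:ℝ)⁻¹ • A).det * ((2:ℝ)⁻¹ • B).det / ((2:ℝ)⁻¹ • A + (2:ℝ)⁻¹ • B).det)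
      = (2:ℝ)⁻¹ ^ p * α ^ 2 * β ^ 2 / √((2:ℝ)⁻¹ • (A + B)).det := by
    rw [← smul_add, sqrt_div' _ hD.le, det_smul, det_smul, Fintype.card_fin, hαA, hβB,
      show (2:ℝ)⁻¹ ^ p * α ^ 4 * ((2:ℝ)⁻¹ ^ p * β ^ 4) = ((2:ℝ)⁻¹ ^ p * α ^ 2 * β ^ 2) ^ 2 by
        ring,
      sqrt_sq (by positivity)]
  rw [phiFactor, hsqrt, hαA, hβB, neg_div, neg_div, rpow_neg (by positivity : (0:ℝ) ≤ α ^ 4),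
    rpow_neg (by positivity : (0:ℝ) ≤ β ^ 4), rpow_neg hD.le, ← sqrt_eq_rpow, hquarter α hα,
    hquarter β hβ, inv_pow]
  field_simp

theorem phiFactor_mul_exp_neg_Qform {A B : Matrix (Fin p) (Fin p) ℝ} (hA : A.PosDef)
    (hB : B.PosDef) (a b : Fin p → ℝ) :
    phiFactor A B * exp (-Qform A B (a - b))
      = 2 ^ p / √π ^ p * ∫ u, (A.det ^ (-(1:ℝ) / 4) * gaussian ((2:ℝ)⁻¹ • A)⁻¹ a u)
          * (B.det ^ (-(1:ℝ) / 4) * gaussian ((2:ℝ)⁻¹ • B)⁻¹ b u) := by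
  have hhalf : (0:ℝ) < 2⁻¹ := inv_pos.2 two_pos
  simp_rw [mul_mul_mul_comm _ (gaussian _ a _)]
  rw [integral_const_mul,
    integral_gaussian_inv_mul_gaussian_inv (hA.smul hhalf) (hB.smul hhalf), Fintype.card_fin,
    phiFactor_eq_s12 hA hB, Qform, smul_add]
  have : √π ^ p ≠ 0 := by positivity
  field_simp

theorem sum_sum_mul_phiFactor_mul_exp_neg_Qform_nonneg {ι : Type*} [Fintype ι]
    (A : ι → Matrix (Fin p) (Fin p) ℝ) (hA : ∀ i, (A i).PosDef) (x : ι → Fin p → ℝ)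
    (c : ι → ℝ) :
    0 ≤ ∑ i, ∑ j, c i * c j * (phiFactor (A i) (A j) * exp (-Qform (A i) (A j) (x i - x j))) := by
  set k : ι → (Fin p → ℝ) → ℝ := fun i u =>
    (A i).det ^ (-(1:ℝ) / 4) * gaussian ((2:ℝ)⁻¹ • A i)⁻¹ (x i) u
  have hk : ∀ i j, Integrable fun u => k i u * k j u := fun i j => by
    have hhalf : (0:ℝ) < 2⁻¹ := inv_pos.2 two_pos
    simp_rw [k, mul_mul_mul_comm _ (gaussian _ (x i) _)]
    exact (integrable_gaussian_mul_gaussian ((hA i).smul hhalf).inv ((hA j).smul hhalf).inv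
      (x i) (x j)).const_mul _
  have hgram : 0 ≤ ∑ i, ∑ j, c i * c j * ∫ u, k i u * k j u :=
    sum_sum_mul_integral_nonneg _ _ hk c (ae_of_all _ fun u => sum_sum_mul_mul_mul_nonneg _ c)
  simp_rw [phiFactor_mul_exp_neg_Qform (hA _) (hA _), mul_left_comm _ (2 ^ p / √π ^ p : ℝ),
    ← Finset.mul_sum]
  exact mul_nonneg (by positivity) hgram

end Nonstationary

theorem nonstationary_covariance_posSemidef_general (p : ℕ)
    (S : (Fin p → ℝ) → Matrix (Fin p) (Fin p) ℝ) (hS : ∀ x, (S x).PosDef)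
    (ξ : Measure ℝ) [IsFiniteMeasure ξ] (σ : (Fin p → ℝ) → ℝ) :
    ∀ (n : ℕ) (x : Fin n → (Fin p → ℝ)) (c : Fin n → ℝ),
      0 ≤ ∑ i : Fin n, ∑ j : Fin n,
        c i * c j * (σ (x i) * σ (x j) * phiFactor (S (x i)) (S (x j)) *
          ∫ t in Set.Ioi (0:ℝ),
            Real.exp (-(Qform (S (x i)) (S (x j)) (x i - x j)) / t ^ 2) ∂ξ) := by
  intro n x c
  set K : Fin n → Fin n → ℝ → ℝ := fun i j t =>
    phiFactor (S (x i)) (S (x j)) * exp (-Qform (S (x i)) (S (x j)) (x i - x j) / t ^ 2)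
  have hK : ∀ i j, Integrable (K i j) (ξ.restrict (Set.Ioi 0)) := fun i j => by
    have hmeas : Measurable fun t : ℝ => exp (-Qform (S (x i)) (S (x j)) (x i - x j) / t ^ 2) :=
      (measurable_const.div (measurable_id.pow_const 2)).exp
    refine (Integrable.of_bound hmeas.aestronglyMeasurable 1
      (ae_of_all _ fun t => ?_)).const_mul _
    rw [norm_of_nonneg (exp_nonneg _), exp_le_one_iff, neg_div]
    exact neg_nonpos.2 (div_nonneg (Qform_nonneg_s12 (hS _) (hS _) _) (sq_nonneg t))
  have hpsd : ∀ t, 0 ≤ ∑ i, ∑ j, c i * σ (x i) * (c j * σ (x j)) * K i j t := by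
    intro t
    have h := sum_sum_mul_phiFactor_mul_exp_neg_Qform_nonneg (fun i => S (x i)) (fun i => hS _)
      (fun i => t⁻¹ • x i) (fun i => c i * σ (x i))
    simpa only [← smul_sub, Qform_smul, inv_pow, ← div_eq_inv_mul, ← neg_div] using h
  have hmix := sum_sum_mul_integral_nonneg _ K hK _ (ae_of_all _ hpsd)
  simp_rw [K, integral_const_mul] at hmix
  convert hmix using 3 with i _ j _
  ring

/-- the non-stationary covariance
`C^{NS}(x,y) = σ(x)σ(y) φ_xy ∫_0^∞ exp(−Q_xy(x−y)/t²) ξ(dt)` is positive semidefinite. -/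
theorem nonstationary_covariance_posSemidef (p : ℕ) (hp : 1 ≤ p)
    (S : (Fin p → ℝ) → Matrix (Fin p) (Fin p) ℝ) (hS : ∀ x, (S x).PosDef)
    (ξ : Measure ℝ) [IsFiniteMeasure ξ] (σ : (Fin p → ℝ) → ℝ) :
    ∀ (n : ℕ) (x : Fin n → (Fin p → ℝ)) (c : Fin n → ℝ),
      0 ≤ ∑ i : Fin n, ∑ j : Fin n,
        c i * c j * (σ (x i) * σ (x j) * phiFactor (S (x i)) (S (x j)) *
          ∫ t in Set.Ioi (0:ℝ),
            Real.exp (-(Qform (S (x i)) (S (x j)) (x i - x j)) / t ^ 2) ∂ξ) :=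
  nonstationary_covariance_posSemidef_general p S hS ξ σ
end
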